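/- Let B be a Brownian motion started at x ∈ ℝ, let c : [0,T] → ℝ be a decreasing right-continuous function with c(t) < x, and define τ = inf{s ∈ (0, T−t] : B_s ≤ c(t+s)}. Then on {τ < ∞}, B_τ = c(t + τ) almost surely. -/
import Mathlib


open MeasureTheory
open scoped ProbabilityTheory

/-- Let `B` be a Brownian motion (continuous paths) started at `x`, let
`c : [0,T] → ℝ` be decreasing and right-continuous with `c(t) < x`, and let
`τ = inf{s ∈ (0, T-t] : B_s ≤ c(t+s)}`. Then on the event where such a time exists
(`τ < ∞`), one has `B_τ = c(t + τ)` almost surely. -/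
theorem hitting_time_is_on_boundary
    {Ω : Type*} [MeasureSpace Ω] [IsProbabilityMeasure (ℙ : Measure Ω)]
    (B : ℝ → Ω → ℝ) (x t T : ℝ) (ht : 0 ≤ t) (htT : t < T)
    (hB0 : ∀ ω, B 0 ω = x) (hBcont : ∀ ω, Continuous fun s => B s ω)
    (c : ℝ → ℝ) (hcMono : AntitoneOn c (Set.Icc 0 T))
    (hcRC : ∀ u ∈ Set.Ico (0:ℝ) T, ContinuousWithinAt c (Set.Ici u) u)
    (hcx : c t < x)
    (τ : Ω → ℝ)
    (hτ : ∀ ω, τ ω = sInf {s : ℝ | s ∈ Set.Ioc 0 (T - t) ∧ B s ω ≤ c (t + s)}) :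
    ∀ᵐ ω ∂(ℙ : Measure Ω),
      {s : ℝ | s ∈ Set.Ioc 0 (T - t) ∧ B s ω ≤ c (t + s)}.Nonempty →
        B (τ ω) ω = c (t + τ ω) := by
  refine ae_of_all _ ?_
  intro ω hne
  set S : Set ℝ := {s : ℝ | s ∈ Set.Ioc 0 (T - t) ∧ B s ω ≤ c (t + s)} with hS
  have hbdd : BddBelow S := ⟨0, fun s hs => hs.1.1.le⟩
  set τ₀ : ℝ := sInf S with hτ₀
  have hτω : τ ω = τ₀ := hτ ω
  rw [hτω]
  obtain ⟨s₀, hs₀⟩ := id hne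
  have hτ₀le : τ₀ ≤ T - t := le_trans (csInf_le hbdd hs₀) hs₀.1.2
  have hτ₀nonneg : 0 ≤ τ₀ := le_csInf hne fun s hs => hs.1.1.le
  -- τ₀ > 0
  have hτ₀pos : 0 < τ₀ := by
    have hcont : ∀ᶠ s in nhds (0:ℝ), c t < B s ω := by
      have : Filter.Tendsto (fun s => B s ω) (nhds 0) (nhds x) := by
        have := (hBcont ω).tendsto 0
        rwa [hB0 ω] at this
      exact this.eventually (eventually_gt_nhds hcx)
    obtain ⟨δ, hδpos, hδ⟩ := Metric.eventually_nhds_iff.mp hcont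
    refine lt_of_lt_of_le hδpos (le_csInf hne fun s hs => ?_)
    by_contra hlt
    push_neg at hlt
    have hdist : dist s (0:ℝ) < δ := by
      rw [Real.dist_eq, sub_zero, abs_of_pos hs.1.1]; exact hlt
    have h1 : c t < B s ω := hδ hdist
    have h2 : c (t + s) ≤ c t := by
      refine hcMono ⟨ht, le_of_lt htT⟩ ⟨by linarith [hs.1.1.le], by linarith [hs.1.2]⟩
        (by linarith [hs.1.1.le])
    linarith [hs.2]
  -- upper bound : B τ₀ ≤ c (t + τ₀)
  have hub : B τ₀ ω ≤ c (t + τ₀) := by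
    by_contra hgt
    push_neg at hgt
    have hcont : ∀ᶠ s in nhds τ₀, c (t + τ₀) < B s ω :=
      ((hBcont ω).tendsto τ₀).eventually (eventually_gt_nhds hgt)
    obtain ⟨δ, hδpos, hδ⟩ := Metric.eventually_nhds_iff.mp hcont
    obtain ⟨s, hsS, hslt⟩ := exists_lt_of_csInf_lt hne (by linarith : sInf S < τ₀ + δ)
    have hsge : τ₀ ≤ s := csInf_le hbdd hsS
    have hdist : dist s τ₀ < δ := by
      rw [Real.dist_eq, abs_of_nonneg (by linarith)]; linarith
    have h1 : c (t + τ₀) < B s ω := hδ hdist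
    have h2 : c (t + s) ≤ c (t + τ₀) := by
      refine hcMono ⟨by linarith [hτ₀nonneg], by linarith⟩
        ⟨by linarith [hsS.1.1.le], by linarith [hsS.1.2]⟩ (by linarith)
    linarith [hsS.2]
  -- lower bound : c (t + τ₀) ≤ B τ₀ ω
  have hlb : c (t + τ₀) ≤ B τ₀ ω := by
    have htend : Filter.Tendsto (fun s => B s ω) (nhdsWithin τ₀ (Set.Iio τ₀))
        (nhds (B τ₀ ω)) :=
      ((hBcont ω).tendsto τ₀).mono_left nhdsWithin_le_nhds
    refine ge_of_tendsto htend ?_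
    have hmem : Set.Ioo 0 τ₀ ∈ nhdsWithin τ₀ (Set.Iio τ₀) :=
      Ioo_mem_nhdsLT_of_mem ⟨hτ₀pos, le_refl _⟩
    filter_upwards [hmem] with s hs
    have hsnot : s ∉ S := fun hmem' => absurd (csInf_le hbdd hmem') (not_le.mpr hs.2)
    have hsIoc : s ∈ Set.Ioc 0 (T - t) := ⟨hs.1, by linarith [hs.2]⟩
    have hBs : c (t + s) < B s ω := by
      by_contra hle
      push_neg at hle
      exact hsnot ⟨hsIoc, hle⟩
    have h2 : c (t + τ₀) ≤ c (t + s) := by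
      refine hcMono ⟨by linarith [hs.1.le], by linarith [hsIoc.2]⟩
        ⟨by linarith [hτ₀nonneg], by linarith⟩ (by linarith [hs.2])
    linarith
  linarith
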